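/- Let G be a totally ordered graph, let x₀x₁ be an edge of G of height r, and let t be a positive integer with C(t,2) < r (where C(t,2) = t(t−1)/2). Then G contains a monotone path x₀x₁…x_t of length t, starting with the edge x₀x₁, whose height is at least r − C(t,2). -/

import Mathlib

/-! Induction on `t`, extending the path at its last vertex `w`. Let `e` be the last edge and `h`
its height. While the cells `(i, w)` with `i < h` were being filled, `e` was still unused and
incident to `w`, so each of them holds an edge at `w` larger than `e`, of height exactly `i`.
The `t` cells in rows `h - t, …, h - 1` give `t` such edges, distinct as their heights differ;
only `t - 1` vertices of the path other than `w` and the other end of `e` are available to them,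
so one of them leaves the path and extends it monotonically, at height at least `h - t`. Summing the losses gives `C(t, 2)`. -/

open scoped Classical

namespace AltitudePaper

variable {V : Type*} [Fintype V]

/-- The list of cells `(i, u)` (row `i`, column `u`), rows `1..N`, in the order
they are filled: by row, then by the vertex (column) order. -/
noncomputable def cellList (ov : LinearOrder V) (N : ℕ) : List (ℕ × V) :=
  letI := ov
  (List.range N).flatMap fun i => ((Finset.univ : Finset V).sort (· ≤ ·)).map fun u => (i + 1, u)

/-- The largest (in the edge order `oe`) edge of `G` incident to `u` not among `used`. -/
noncomputable def pick (G : SimpleGraph V) (oe : LinearOrder (Sym2 V)) (u : V)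
    (used : Finset (Sym2 V)) : Option (Sym2 V) :=
  letI := oe
  ((Finset.univ : Finset (Sym2 V)).filter fun e => e ∈ G.edgeSet ∧ u ∈ e ∧ e ∉ used).max

/-- Fill the given list of cells in order, greedily placing at each cell `(i,u)` the
largest unused edge incident to `u`. -/
noncomputable def tableAux (G : SimpleGraph V) (oe : LinearOrder (Sym2 V)) :
    List (ℕ × V) → Finset (Sym2 V) → (ℕ × V) → Option (Sym2 V)
  | [], _, _ => none
  | c :: rest, used, β =>
    match pick G oe c.2 used with
    | none => if β = c then none else tableAux G oe rest used β
    | some e => if β = c then some e else tableAux G oe rest (insert e used) β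

/-- The height table of the totally ordered graph `(G, ov, oe)`:  cells `(i,u)` with
`i` a positive integer (row) and `u` a vertex (column) are filled in order (by row,
then by column order), each cell receiving the largest edge incident to its column
not appearing in an earlier cell (and left empty if there is none). -/
noncomputable def heightTable (G : SimpleGraph V) (ov : LinearOrder V)
    (oe : LinearOrder (Sym2 V)) : ℕ × V → Option (Sym2 V) :=
  tableAux G oe (cellList ov (Fintype.card (Sym2 V))) ∅

/-- The height `h_G(e)` of an edge `e`: the index of the row of the height table
containing `e`. -/
noncomputable def edgeHeight (G : SimpleGraph V) (ov : LinearOrder V)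
    (oe : LinearOrder (Sym2 V)) (e : Sym2 V) : ℕ :=
  sSup {i | ∃ u, heightTable G ov oe (i, u) = some e}

/-- A monotone path in the edge-ordered graph `(G, oe)`: a path traversing its
edges in increasing order of the edge ordering. -/
def IsMonotonePath (G : SimpleGraph V) (oe : LinearOrder (Sym2 V)) {u v : V}
    (p : G.Walk u v) : Prop :=
  p.IsPath ∧ List.Chain' (fun e f => oe.lt e f) p.edges

/-- The height of a (nontrivial) monotone path: the height of its last edge. -/
noncomputable def pathHeight (G : SimpleGraph V) (ov : LinearOrder V)
    (oe : LinearOrder (Sym2 V)) {u v : V} (p : G.Walk u v) : ℕ :=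
  (p.edges.getLast?.map (edgeHeight G ov oe)).getD 0

theorem _root_.List.Pairwise.exists_eq_append_cons {α : Type*} {R : α → α → Prop}
    {l : List α} (hl : l.Pairwise R) {a b : α} (ha : a ∈ l) (hb : b ∈ l) (hab : a ≠ b)
    (hba : ¬R b a) :
    ∃ l₁ l₂, l = l₁ ++ a :: l₂ ∧ b ∈ l₂ := by
  obtain ⟨l₁, l₂, rfl⟩ := List.append_of_mem ha
  refine ⟨l₁, l₂, rfl, ?_⟩
  rcases List.mem_append.mp hb with hb₁ | hb₂
  · exact absurd (List.pairwise_append.mp hl |>.2.2 b hb₁ a List.mem_cons_self) hba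
  · exact (List.mem_cons.mp hb₂).resolve_left hab.symm

section Table

variable {G : SimpleGraph V} {oe : LinearOrder (Sym2 V)} {u : V} {used : Finset (Sym2 V)}
  {e f : Sym2 V}

lemma pick_spec (h : pick G oe u used = some f) : f ∈ G.edgeSet ∧ u ∈ f ∧ f ∉ used := by
  let := oe
  simpa using Finset.mem_of_max h

lemma le_of_pick_eq_some (hf : pick G oe u used = some f) (he : e ∈ G.edgeSet) (hu : u ∈ e)
    (hused : e ∉ used) : oe.le e f := by
  let := oe
  exact Finset.le_max_of_eq (by simp [he, hu, hused]) hf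

lemma pick_ne_none (he : e ∈ G.edgeSet) (hu : u ∈ e) (hused : e ∉ used) :
    pick G oe u used ≠ none := by
  let := oe
  exact fun h => Finset.ne_empty_of_mem (a := e) (by simp [he, hu, hused]) (Finset.max_eq_bot.mp h)

variable {c β γ : ℕ × V} {rest : List (ℕ × V)}

lemma tableAux_cons_of_pick_eq_none (hp : pick G oe c.2 used = none) :
    tableAux G oe (c :: rest) used β = if β = c then none else tableAux G oe rest used β := by
  simp only [tableAux, hp]

lemma tableAux_cons_of_pick_eq_some (hp : pick G oe c.2 used = some f) :
    tableAux G oe (c :: rest) used β =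
      if β = c then some f else tableAux G oe rest (insert f used) β := by
  simp only [tableAux, hp]

lemma tableAux_spec {L : List (ℕ × V)} (h : tableAux G oe L used β = some e) :
    e ∈ G.edgeSet ∧ β.2 ∈ e ∧ e ∉ used ∧ β ∈ L := by
  induction L generalizing used with
  | nil => simp [tableAux] at h
  | cons c rest ih =>
    rcases hp : pick G oe c.2 used with _ | g
    · rw [tableAux_cons_of_pick_eq_none hp] at h
      split_ifs at h
      obtain ⟨he, hβ, hused, hmem⟩ := ih h
      exact ⟨he, hβ, hused, List.mem_cons_of_mem _ hmem⟩
    · rw [tableAux_cons_of_pick_eq_some hp] at h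
      split_ifs at h with hβc
      · cases h
        subst hβc
        exact ⟨(pick_spec hp).1, (pick_spec hp).2.1, (pick_spec hp).2.2, List.mem_cons_self⟩
      · obtain ⟨he, hβ, hused, hmem⟩ := ih h
        exact ⟨he, hβ, fun h' => hused (Finset.mem_insert_of_mem h'),
          List.mem_cons_of_mem _ hmem⟩

lemma tableAux_injective {L : List (ℕ × V)} (hβ : tableAux G oe L used β = some e)
    (hγ : tableAux G oe L used γ = some e) : β = γ := by
  induction L generalizing used with
  | nil => simp [tableAux] at hβ
  | cons c rest ih =>
    rcases hp : pick G oe c.2 used with _ | g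
    · rw [tableAux_cons_of_pick_eq_none hp] at hβ hγ
      split_ifs at hβ hγ
      exact ih hβ hγ
    · rw [tableAux_cons_of_pick_eq_some hp] at hβ hγ
      -- an edge placed at `c` is used from then on, so it cannot reappear later
      split_ifs at hβ hγ with hβc hγc hγc
      · rw [hβc, hγc]
      · cases hβ
        exact absurd (Finset.mem_insert_self _ _) (tableAux_spec hγ).2.2.1
      · cases hγ
        exact absurd (Finset.mem_insert_self _ _) (tableAux_spec hβ).2.2.1
      · exact ih hβ hγ

/-- When the cell `γ` is filled, an edge at its column that is placed in a later cell `β` is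
still unused, so `γ` receives a strictly larger edge. -/
lemma exists_tableAux_gt (hγe : γ.2 ∈ e) (L₁ L₂ : List (ℕ × V))
    (hnd : (L₁ ++ γ :: L₂).Nodup) (hβ : β ∈ L₂)
    (hβe : tableAux G oe (L₁ ++ γ :: L₂) used β = some e) :
    ∃ f, tableAux G oe (L₁ ++ γ :: L₂) used γ = some f ∧ oe.lt e f := by
  let := oe
  induction L₁ generalizing used with
  | nil =>
    rw [List.nil_append] at hnd hβe ⊢
    have hβγ : β ≠ γ := by rintro rfl; exact (List.nodup_cons.mp hnd).1 hβ
    rcases hp : pick G oe γ.2 used with _ | g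
    · rw [tableAux_cons_of_pick_eq_none hp, if_neg hβγ] at hβe
      obtain ⟨he, -, hused, -⟩ := tableAux_spec hβe
      exact absurd hp (pick_ne_none he hγe hused)
    · rw [tableAux_cons_of_pick_eq_some hp, if_neg hβγ] at hβe
      obtain ⟨he, -, hused, -⟩ := tableAux_spec hβe
      refine ⟨g, by rw [tableAux_cons_of_pick_eq_some hp, if_pos rfl], ?_⟩
      have hle := le_of_pick_eq_some hp he hγe fun h => hused (Finset.mem_insert_of_mem h)
      refine @lt_of_le_of_ne _ oe.toPartialOrder _ _ hle ?_
      rintro rfl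
      exact hused (Finset.mem_insert_self _ _)
  | cons c L₁ ih =>
    rw [List.cons_append] at hnd hβe ⊢
    have hc : c ∉ L₁ ++ γ :: L₂ := (List.nodup_cons.mp hnd).1
    have hβc : β ≠ c := by rintro rfl; exact hc (by simp [hβ])
    have hγc : γ ≠ c := by rintro rfl; exact hc (by simp)
    rcases hp : pick G oe c.2 used with _ | g
    · rw [tableAux_cons_of_pick_eq_none hp, if_neg hβc] at hβe
      rw [tableAux_cons_of_pick_eq_none hp, if_neg hγc]
      exact ih (List.nodup_cons.mp hnd).2 hβe
    · rw [tableAux_cons_of_pick_eq_some hp, if_neg hβc] at hβe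
      rw [tableAux_cons_of_pick_eq_some hp, if_neg hγc]
      exact ih (List.nodup_cons.mp hnd).2 hβe

end Table

section HeightTable

variable (ov : LinearOrder V) {G : SimpleGraph V} {oe : LinearOrder (Sym2 V)}

lemma mem_cellList {N i : ℕ} {u : V} : (i, u) ∈ cellList ov N ↔ 1 ≤ i ∧ i ≤ N := by
  let := ov
  simp only [cellList, List.mem_flatMap, List.mem_map, List.mem_range, Prod.mk.injEq]
  constructor
  · rintro ⟨j, hj, v, -, rfl, rfl⟩
    omega
  · rintro ⟨h1, h2⟩
    exact ⟨i - 1, by omega, u, by simp, by omega, rfl⟩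

lemma cellList_nodup (N : ℕ) : (cellList ov N).Nodup := by
  let := ov
  rw [cellList, List.nodup_flatMap]
  refine ⟨fun _ _ => (Finset.sort_nodup _ _).map fun u v h => by simpa using h, ?_⟩
  refine List.pairwise_lt_range.imp fun hab x hxa hxb => ?_
  simp only [List.mem_map] at hxa hxb
  obtain ⟨u, -, rfl⟩ := hxa
  obtain ⟨v, -, hv⟩ := hxb
  simp only [Prod.mk.injEq] at hv
  omega

lemma cellList_pairwise_fst_le (N : ℕ) : (cellList ov N).Pairwise fun c d => c.1 ≤ d.1 := by
  let := ov
  rw [cellList, List.pairwise_flatMap]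
  refine ⟨fun _ _ => List.pairwise_map.mpr (List.Pairwise.imp (fun _ => le_rfl)
    (Finset.sort_nodup _ _)), List.pairwise_lt_range.imp fun hab x hxa y hyb => ?_⟩
  simp only [List.mem_map] at hxa hyb
  obtain ⟨u, -, rfl⟩ := hxa
  obtain ⟨v, -, rfl⟩ := hyb
  simp only
  omega

lemma heightTable_spec {i : ℕ} {u : V} {e : Sym2 V} (h : heightTable G ov oe (i, u) = some e) :
    e ∈ G.edgeSet ∧ u ∈ e ∧ 1 ≤ i ∧ i ≤ Fintype.card (Sym2 V) := by
  obtain ⟨he, hu, -, hmem⟩ := tableAux_spec h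
  exact ⟨he, hu, (mem_cellList ov).mp hmem⟩

lemma edgeHeight_eq_of_heightTable {i : ℕ} {u : V} {e : Sym2 V}
    (h : heightTable G ov oe (i, u) = some e) : edgeHeight G ov oe e = i := by
  have hrows : {j | ∃ v, heightTable G ov oe (j, v) = some e} = {i} := by
    ext j
    refine ⟨fun ⟨v, hv⟩ => congrArg Prod.fst (tableAux_injective hv h), ?_⟩
    rintro rfl
    exact ⟨u, h⟩
  rw [edgeHeight, hrows, csSup_singleton]

-- `edgeHeight` is an `sSup`, which is `0` for an edge absent from the table.
lemma exists_heightTable_of_edgeHeight_pos {e : Sym2 V} (h : 0 < edgeHeight G ov oe e) :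
    ∃ w, heightTable G ov oe (edgeHeight G ov oe e, w) = some e := by
  have hbdd : BddAbove {j | ∃ v, heightTable G ov oe (j, v) = some e} :=
    ⟨Fintype.card (Sym2 V), fun j ⟨_, hv⟩ => (heightTable_spec ov hv).2.2.2⟩
  have hne : {j | ∃ v, heightTable G ov oe (j, v) = some e}.Nonempty := by
    by_contra hempty
    rw [Set.not_nonempty_iff_eq_empty] at hempty
    rw [edgeHeight, hempty, csSup_empty] at h
    exact h.ne rfl
  exact Nat.sSup_mem hne hbdd

lemma exists_gt_of_lt_edgeHeight {e : Sym2 V} {u : V} (hu : u ∈ e) {i : ℕ} (hi : 1 ≤ i)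
    (hih : i < edgeHeight G ov oe e) :
    ∃ f ∈ G.edgeSet, u ∈ f ∧ oe.lt e f ∧ edgeHeight G ov oe f = i := by
  obtain ⟨w, hw⟩ := exists_heightTable_of_edgeHeight_pos ov
    (by omega : 0 < edgeHeight G ov oe e)
  have hN := (heightTable_spec ov hw).2.2.2
  obtain ⟨L₁, L₂, hL, hmem⟩ := (cellList_pairwise_fst_le ov _).exists_eq_append_cons
    ((mem_cellList ov (u := u)).mpr ⟨hi, by omega⟩)
    ((mem_cellList ov (u := w)).mpr ⟨by omega, hN⟩) (by simp [hih.ne]) (by simpa using hih)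
  have hnd := cellList_nodup ov (Fintype.card (Sym2 V))
  rw [hL] at hnd
  rw [heightTable, hL] at hw
  obtain ⟨f, hf, hlt⟩ := exists_tableAux_gt hu L₁ L₂ hnd hmem hw
  have hf' : heightTable G ov oe (i, u) = some f := by rw [heightTable, hL]; exact hf
  exact ⟨f, (heightTable_spec ov hf').1, (heightTable_spec ov hf').2.1, hlt,
    edgeHeight_eq_of_heightTable ov hf'⟩

end HeightTable

section MonotonePath

open SimpleGraph Walk

variable {G : SimpleGraph V} {ov : LinearOrder V} {oe : LinearOrder (Sym2 V)} {u v w : V}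

lemma pathHeight_eq_of_not_nil {p : G.Walk u v} (hp : ¬p.Nil) :
    pathHeight G ov oe p = edgeHeight G ov oe s(p.penultimate, v) := by
  rw [pathHeight, List.getLast?_eq_some_getLast (edges_eq_nil.not.mpr hp),
    getLast_edges_eq_mk_penultimate_end]
  rfl

lemma pathHeight_concat (p : G.Walk u v) (h : G.Adj v w) :
    pathHeight G ov oe (p.concat h) = edgeHeight G ov oe s(v, w) := by
  simp [pathHeight, edges_concat]

omit [Fintype V] in
lemma IsMonotonePath.concat {p : G.Walk u v} (hp : IsMonotonePath G oe p) (hnil : ¬p.Nil)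
    (h : G.Adj v w) (hw : w ∉ p.support) (hlt : oe.lt s(p.penultimate, v) s(v, w)) :
    IsMonotonePath G oe (p.concat h) := by
  refine ⟨hp.1.concat hw h, ?_⟩
  rw [edges_concat, List.concat_eq_append]
  refine hp.2.append (List.isChain_singleton _) fun x hx y hy => ?_
  rw [List.getLast?_eq_some_getLast (edges_eq_nil.not.mpr hnil),
    getLast_edges_eq_mk_penultimate_end, Option.mem_some_iff] at hx
  rw [List.head?_cons, Option.mem_some_iff] at hy
  exact hx ▸ hy ▸ hlt

lemma exists_adj_notMem_support {p : G.Walk u v} (hp : p.IsPath) (hnil : ¬p.Nil)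
    (hlen : p.length < edgeHeight G ov oe s(p.penultimate, v)) :
    ∃ w, G.Adj v w ∧ w ∉ p.support ∧ oe.lt s(p.penultimate, v) s(v, w) ∧
      edgeHeight G ov oe s(p.penultimate, v) - p.length ≤ edgeHeight G ov oe s(v, w) := by
  set e := s(p.penultimate, v)
  set h := edgeHeight G ov oe e
  set t := p.length
  by_contra! hback
  let A := Finset.univ.filter fun f => f ∈ G.edgeSet ∧ v ∈ f ∧ oe.lt e f ∧
    edgeHeight G ov oe f ∈ Finset.Icc (h - t) (h - 1)
  have hA : t ≤ A.card := by
    have := Finset.card_le_card_of_surjOn (s := A) (t := Finset.Icc (h - t) (h - 1))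
      (edgeHeight G ov oe) fun i hi => by
      rw [Finset.coe_Icc, Set.mem_Icc] at hi
      obtain ⟨f, hf, hvf, hlt, rfl⟩ := exists_gt_of_lt_edgeHeight (G := G) (oe := oe) ov
        (Sym2.mem_mk_right _ v) (by omega : 1 ≤ i) (by omega : i < h)
      exact ⟨f, Finset.mem_filter.mpr
        ⟨Finset.mem_univ _, hf, hvf, hlt, Finset.mem_Icc.mpr hi⟩, rfl⟩
    rwa [Nat.card_Icc, show h - 1 + 1 - (h - t) = t by omega] at this
  let B := (p.support.toFinset.erase v).image fun x => s(v, x)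
  have hB : B.card ≤ t := by
    refine Finset.card_image_le.trans_eq ?_
    rw [Finset.card_erase_of_mem (List.mem_toFinset.mpr p.end_mem_support),
      List.toFinset_card_of_nodup hp.support_nodup, length_support, Nat.add_sub_cancel]
  have hmemB : ∀ x, G.Adj v x → x ∈ p.support → s(v, x) ∈ B := fun x hx hxp =>
    Finset.mem_image_of_mem _ (Finset.mem_erase.mpr ⟨hx.ne', List.mem_toFinset.mpr hxp⟩)
  have heB : e ∈ B := by
    rw [show e = s(v, p.penultimate) from Sym2.eq_swap]
    exact hmemB _ (adj_penultimate hnil).symm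
      (p.fst_mem_support_of_mem_edges (mk_penultimate_end_mem_edges hnil))
  have hAB : insert e A ⊆ B := by
    refine Finset.insert_subset heB fun f hf => ?_
    obtain ⟨hfG, hvf, hlt, hfh⟩ := (Finset.mem_filter.mp hf).2
    obtain ⟨x, rfl⟩ := Sym2.mem_iff_exists.mp hvf
    refine hmemB x hfG (by_contra fun hxp => ?_)
    exact (hback x hfG hxp hlt).not_ge (Finset.mem_Icc.mp hfh).1
  have := Finset.card_le_card hAB
  rw [Finset.card_insert_of_notMem (by simp [A])] at this
  omega

lemma IsMonotonePath.exists_concat {p : G.Walk u v} (hp : IsMonotonePath G oe p) (hnil : ¬p.Nil)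
    (hlen : p.length < pathHeight G ov oe p) :
    ∃ (w : V) (h : G.Adj v w), IsMonotonePath G oe (p.concat h) ∧
      pathHeight G ov oe p - p.length ≤ pathHeight G ov oe (p.concat h) := by
  rw [pathHeight_eq_of_not_nil hnil] at hlen ⊢
  obtain ⟨w, hvw, hw, hlt, hheight⟩ := exists_adj_notMem_support hp.1 hnil hlen
  exact ⟨w, hvw, hp.concat hnil hvw hw hlt, by rwa [pathHeight_concat]⟩

end MonotonePath

/-- Lemma 2 of the paper.  If `x₀x₁` is an edge of height `r` in a
totally ordered graph and `t` is a positive integer with `C(t,2) < r`, then `G`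
contains a monotone path of length `t` starting with the edge `x₀x₁` whose height is
at least `r - C(t,2)`. -/
theorem monotone_path_from_high_edge {V : Type*} [Fintype V] (G : SimpleGraph V)
    (ov : LinearOrder V) (oe : LinearOrder (Sym2 V)) {x₀ x₁ : V} (hadj : G.Adj x₀ x₁)
    (r t : ℕ) (hr : edgeHeight G ov oe s(x₀, x₁) = r) (ht : 1 ≤ t)
    (htr : t.choose 2 < r) :
    ∃ (w : V) (p : G.Walk x₀ w),
      IsMonotonePath G oe p ∧ p.length = t ∧ p.edges.head? = some s(x₀, x₁) ∧
        r - t.choose 2 ≤ pathHeight G ov oe p := by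
  induction t, ht using Nat.le_induction with
  | base =>
    refine ⟨x₁, .cons hadj .nil, ⟨?_, List.isChain_singleton _⟩, rfl, rfl, ?_⟩
    · simp [SimpleGraph.Walk.cons_isPath_iff, hadj.ne]
    · simp [pathHeight, hr]
  | succ t ht ih =>
    have hchoose : (t + 1).choose 2 = t.choose 2 + t := by
      rw [Nat.choose_succ_succ', Nat.choose_one_right, add_comm]
    obtain ⟨w, p, hp, rfl, hhead, hheight⟩ := ih (by omega)
    have hnil : ¬p.Nil := SimpleGraph.Walk.not_nil_iff_lt_length.mpr (by omega)
    obtain ⟨y, hwy, hp', hheight'⟩ := hp.exists_concat (ov := ov) hnil (by omega)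
    refine ⟨y, p.concat hwy, hp', p.length_concat hwy, ?_, by omega⟩
    rw [SimpleGraph.Walk.edges_concat, List.concat_eq_append,
      List.head?_append_of_ne_nil _ (SimpleGraph.Walk.edges_eq_nil.not.mpr hnil), hhead]

end AltitudePaper
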